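/- Let p be a point sphere complex and ℝ^{4,2} = D₁ ⊕⊥ D₂ a Dupin cyclide. Let s₀, s ∈ D₁ be isotropic vectors with ⟨s₀,p⟩ ≠ 0, ⟨s,p⟩ ≠ 0 and ⟨s₀,s⟩ ≠ 0, and set a := ⟨s,p⟩s₀ − ⟨s₀,p⟩s. Then a ∈ D₁, ⟨a,p⟩ = 0 and ⟨a,a⟩ ≠ 0, so σ_a is an M-Lie inversion; moreover σ_a(s₀) = (⟨s₀,p⟩/⟨s,p⟩)·s, and σ_a fixes D₂ pointwise: σ_a(x) = x for every x ∈ D₂. In particular, the evolution map of a Dupin cyclide maps the base curvature sphere s₀ onto the curvature sphere s of the same family and fixes every curvature sphere of the other family. -/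

import Mathlib

noncomputable section

/-- The symmetric bilinear form of signature (4,2) on ℝ⁶, modelling ℝ^{4,2}. -/
def B (x y : Fin 6 → ℝ) : ℝ :=
  x 0 * y 0 + x 1 * y 1 + x 2 * y 2 + x 3 * y 3 - x 4 * y 4 - x 5 * y 5

/-- The Lie inversion with respect to the linear sphere complex `a`. -/
def lieInv (a x : Fin 6 → ℝ) : Fin 6 → ℝ :=
  x - (2 * B x a / B a a) • a

/-- The induced form on the subspace `W` has signature (2,1) (it admits a
spanning pseudo-orthonormal triple of Gram matrix diag(1,1,-1)); in particular
`W` is 3-dimensional. -/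
def SigTwoOne (W : Submodule ℝ (Fin 6 → ℝ)) : Prop :=
  ∃ u v w : Fin 6 → ℝ, Submodule.span ℝ ({u, v, w} : Set (Fin 6 → ℝ)) = W ∧
    B u u = 1 ∧ B v v = 1 ∧ B w w = -1 ∧ B u v = 0 ∧ B u w = 0 ∧ B v w = 0

/-!
Writing `α = ⟨s,p⟩` and `β = ⟨s₀,p⟩`, the vector `a = α s₀ - β s` lies in the span of the
two isotropic vectors `s₀, s`, so `⟨a,a⟩ = -2αβ⟨s₀,s⟩ ≠ 0` and `⟨s₀,a⟩ = -β⟨s₀,s⟩`; hence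
`σ_a(s₀) = s₀ - a/α = (β/α) s`. The choice of coefficients makes `⟨a,p⟩ = αβ - βα = 0`,
and `σ_a` fixes `D₂` pointwise because `a ∈ D₁ ⊥ D₂`.
-/

theorem B_comm (x y : Fin 6 → ℝ) : B x y = B y x := by
  simp only [B]; ring

theorem B_sub_left (x y z : Fin 6 → ℝ) : B (x - y) z = B x z - B y z := by
  simp only [B, Pi.sub_apply]; ring

theorem B_smul_left (c : ℝ) (x y : Fin 6 → ℝ) : B (c • x) y = c * B x y := by
  simp only [B, Pi.smul_apply, smul_eq_mul]; ring

theorem B_sub_right (x y z : Fin 6 → ℝ) : B x (y - z) = B x y - B x z := by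
  rw [B_comm, B_sub_left, B_comm y, B_comm z]

theorem B_smul_right (c : ℝ) (x y : Fin 6 → ℝ) : B x (c • y) = c * B x y := by
  rw [B_comm, B_smul_left, B_comm]

theorem lieInv_eq_self_of_B_eq_zero {a x : Fin 6 → ℝ} (h : B x a = 0) : lieInv a x = x := by
  simp [lieInv, h]

section IsotropicPair

variable {s₀ s : Fin 6 → ℝ}

theorem B_sub_smul_self_of_isotropic (i₀ : B s₀ s₀ = 0) (i : B s s = 0) (α β : ℝ) :
    B (α • s₀ - β • s) (α • s₀ - β • s) = -2 * α * β * B s₀ s := by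
  simp only [B_sub_left, B_sub_right, B_smul_left, B_smul_right, i₀, i, B_comm s]
  ring

theorem B_left_sub_smul_of_isotropic (i₀ : B s₀ s₀ = 0) (α β : ℝ) :
    B s₀ (α • s₀ - β • s) = -β * B s₀ s := by
  rw [B_sub_right, B_smul_right, B_smul_right, i₀]
  ring

theorem lieInv_sub_smul_of_isotropic (i₀ : B s₀ s₀ = 0) (i : B s s = 0) {α β : ℝ}
    (hα : α ≠ 0) (hβ : β ≠ 0) (h₀s : B s₀ s ≠ 0) :
    lieInv (α • s₀ - β • s) s₀ = (β / α) • s := by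
  rw [lieInv, B_sub_smul_self_of_isotropic i₀ i, B_left_sub_smul_of_isotropic i₀]
  have hcoef : 2 * (-β * B s₀ s) / (-2 * α * β * B s₀ s) = α⁻¹ := by
    field_simp
  rw [hcoef, smul_sub, smul_smul, smul_smul, inv_mul_cancel₀ hα, one_smul, sub_sub_cancel,
    div_eq_inv_mul]

end IsotropicPair

theorem stmt_5_general (p : Fin 6 → ℝ)
    (D₁ D₂ : Submodule ℝ (Fin 6 → ℝ))
    (horth : ∀ x ∈ D₁, ∀ y ∈ D₂, B x y = 0)
    (s₀ s : Fin 6 → ℝ) (hs₀D : s₀ ∈ D₁) (hsD : s ∈ D₁)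
    (i₀ : B s₀ s₀ = 0) (i : B s s = 0)
    (h₀p : B s₀ p ≠ 0) (hsp : B s p ≠ 0) (h₀s : B s₀ s ≠ 0)
    (a : Fin 6 → ℝ) (ha : a = B s p • s₀ - B s₀ p • s) :
    a ∈ D₁ ∧ B a p = 0 ∧ B a a ≠ 0 ∧
    lieInv a s₀ = (B s₀ p / B s p) • s ∧
    (∀ x ∈ D₂, lieInv a x = x) := by
  subst ha
  have haD : B s p • s₀ - B s₀ p • s ∈ D₁ :=
    D₁.sub_mem (D₁.smul_mem _ hs₀D) (D₁.smul_mem _ hsD)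
  refine ⟨haD, ?_, ?_, lieInv_sub_smul_of_isotropic i₀ i hsp h₀p h₀s, ?_⟩
  · rw [B_sub_left, B_smul_left, B_smul_left]
    ring
  · rw [B_sub_smul_self_of_isotropic i₀ i]
    exact mul_ne_zero (mul_ne_zero (mul_ne_zero (by norm_num) hsp) h₀p) h₀s
  · intro x hx
    exact lieInv_eq_self_of_B_eq_zero (by rw [B_comm]; exact horth _ haD x hx)

/-- For a Dupin cyclide `ℝ^{4,2} = D₁ ⊕⊥ D₂` and regular
curvature spheres `s₀, s ∈ D₁` with `⟨s₀,s⟩ ≠ 0`, the vector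
`a = ⟨s,p⟩s₀ - ⟨s₀,p⟩s ∈ D₁` defines an M-Lie inversion mapping `s₀` onto `s`
and fixing every curvature sphere of the other family `D₂` pointwise. -/
theorem stmt_5 (p : Fin 6 → ℝ) (hp : B p p = -1)
    (D₁ D₂ : Submodule ℝ (Fin 6 → ℝ))
    (hdim₁ : Module.finrank ℝ D₁ = 3) (hdim₂ : Module.finrank ℝ D₂ = 3)
    (hsig₁ : SigTwoOne D₁) (hsig₂ : SigTwoOne D₂)
    (horth : ∀ x ∈ D₁, ∀ y ∈ D₂, B x y = 0)
    (hspan : D₁ ⊔ D₂ = ⊤)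
    (s₀ s : Fin 6 → ℝ) (hs₀D : s₀ ∈ D₁) (hsD : s ∈ D₁)
    (hs₀ : s₀ ≠ 0) (hs : s ≠ 0) (i₀ : B s₀ s₀ = 0) (i : B s s = 0)
    (h₀p : B s₀ p ≠ 0) (hsp : B s p ≠ 0) (h₀s : B s₀ s ≠ 0)
    (a : Fin 6 → ℝ) (ha : a = B s p • s₀ - B s₀ p • s) :
    a ∈ D₁ ∧ B a p = 0 ∧ B a a ≠ 0 ∧
    lieInv a s₀ = (B s₀ p / B s p) • s ∧
    (∀ x ∈ D₂, lieInv a x = x) :=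
  stmt_5_general p D₁ D₂ horth s₀ s hs₀D hsD i₀ i h₀p hsp h₀s a ha
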